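/- arXiv:1505.03559 — 2 statements merged into one kernel-verified Lean document; each statement's English description precedes it below -/
import Mathlib

section
/- Let K be a number field, v ∈ M_K a place of K, and F = (F₀,F₁,F₂) a triple of homogeneous polynomials of common degree λ ≥ 2 in K[x₀,x₁,x₂]. Let a ∈ K³ be such that a_k := F^k(a) ≠ 0 for every k ≥ 0 (where F^k denotes the k-fold composition of the induced map F : K³ → K³). Then there is a real constant B (depending on F, v and a but not on n) such that for every n ≥ 0 one has ∑_{k=0}^{n-1} λ^{-k} ( (1/λ)·log‖F(a_k)‖_v − log‖a_k‖_v ) ≥ −B; in particular the series ∑_{k≥0} λ^{-k} ( (1/λ)·log‖F(a_k)‖_v − log‖a_k‖_v ) does not diverge to −∞. -/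
open MvPolynomial Filter

noncomputable def polyMap {K : Type*} [Field K] (P : Fin 3 → MvPolynomial (Fin 3) K) :
    (Fin 3 → K) → (Fin 3 → K) :=
  fun a i => eval a (P i)

noncomputable def vNorm {K : Type*} [Field K] (v : AbsoluteValue K ℝ) (b : Fin 3 → K) : ℝ :=
  max (v (b 0)) (max (v (b 1)) (v (b 2)))

/-!
With `L_w(n) = log ‖Fⁿ(a)‖_w`, the sum telescopes to `λ⁻ⁿ L_v(n) - L_v(0)`, so only a lower
bound for `λ⁻ⁿ L_v(n)` is needed. At every place `‖F(b)‖_w ≤ C_w ‖b‖_w^λ`, with `C_w = 1` at the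
nonarchimedean places where all coefficients of `F` are integral, hence at all but finitely many
places; iterating gives `L_w(n) ≤ λⁿ g_w` for some `g ≥ 0` of finite support. Applying the product
formula to a nonzero coordinate `c` of `Fⁿ(a)`, `log |c|_v = -∑_{w ≠ v} log |c|_w ≥ -λⁿ ∑_w g_w`.
-/

open Real Function

lemma le_one_of_log_eq_zero {x : ℝ} (h : log x = 0) : x ≤ 1 := by
  rcases Real.log_eq_zero.mp h with rfl | rfl | rfl <;> norm_num

lemma le_pow_mul_of_le_add_mul {x : ℕ → ℝ} {c m lam : ℝ} (hlam : 2 ≤ lam) (hc : 0 ≤ c)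
    (h0 : x 0 ≤ m) (hx : ∀ n, x (n + 1) ≤ c + lam * x n) (n : ℕ) :
    x n ≤ lam ^ n * (c + m) := by
  -- the slack `- c` absorbs the additive constant at each step, since `lam - 1 ≥ 1`
  have key : ∀ n, x n ≤ lam ^ n * (c + m) - c := by
    intro n
    induction n with
    | zero => simpa using h0
    | succ n ih =>
      calc x (n + 1) ≤ c + lam * x n := hx n
        _ ≤ c + lam * (lam ^ n * (c + m) - c) := by gcongr
        _ ≤ lam ^ (n + 1) * (c + m) - c := by rw [pow_succ]; nlinarith
  linarith [key n]

lemma sum_range_inv_pow_mul_sub (x : ℕ → ℝ) (lam : ℝ) (n : ℕ) :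
    ∑ k ∈ Finset.range n, lam⁻¹ ^ k * (1 / lam * x (k + 1) - x k) = lam⁻¹ ^ n * x n - x 0 := by
  convert Finset.sum_range_sub (fun k => lam⁻¹ ^ k * x k) n using 1
  · exact Finset.sum_congr rfl fun k _ => by ring
  · simp

lemma neg_finsum_le_of_finsum_eq_zero {ι : Type*} {f g : ι → ℝ} (hf : (support f).Finite)
    (hg : (support g).Finite) (hsum : ∑ᶠ w, f w = 0) {v : ι} (hgv : 0 ≤ g v)
    (hfg : ∀ w ≠ v, f w ≤ g w) : -∑ᶠ w, g w ≤ f v := by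
  classical
  have hsingle : (support (Pi.single v (f v) : ι → ℝ)).Finite :=
    (Set.finite_singleton v).subset Pi.support_single_subset
  have hle : ∑ᶠ w, f w ≤ ∑ᶠ w, (g w + (Pi.single v (f v) : ι → ℝ) w) := by
    refine finsum_le_finsum' hf ((hg.union hsingle).subset (support_add _ _)) fun w => ?_
    rcases eq_or_ne w v with rfl | hw
    · simpa using hgv
    · simpa [hw] using hfg w hw
  rw [finsum_add_distrib hg hsingle,
    finsum_eq_single (Pi.single v (f v) : ι → ℝ) v fun w hw => Pi.single_eq_of_ne hw _,
    Pi.single_eq_same, hsum] at hle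
  linarith

section vNorm

variable {K : Type*} [Field K] (v : AbsoluteValue K ℝ)

lemma le_vNorm (b : Fin 3 → K) (i : Fin 3) : v (b i) ≤ vNorm v b := by
  fin_cases i <;> simp [vNorm]

lemma vNorm_le {b : Fin 3 → K} {C : ℝ} (h : ∀ i, v (b i) ≤ C) : vNorm v b ≤ C :=
  max_le (h 0) (max_le (h 1) (h 2))

lemma vNorm_nonneg (b : Fin 3 → K) : 0 ≤ vNorm v b :=
  (v.nonneg _).trans (le_vNorm v b 0)

lemma vNorm_pos {b : Fin 3 → K} (hb : b ≠ 0) : 0 < vNorm v b := by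
  obtain ⟨i, hi⟩ := Function.ne_iff.mp hb
  exact (v.pos hi).trans_le (le_vNorm v b i)

lemma vNorm_eq_iSup (b : Fin 3 → K) : vNorm v b = ⨆ i, v (b i) :=
  le_antisymm (vNorm_le v fun i => Finite.le_ciSup (fun j => v (b j)) i)
    (ciSup_le (le_vNorm v b))

end vNorm

section polyMap

variable {K : Type*} [Field K]

open Classical in
noncomputable def polyMapBound (v : AbsoluteValue K ℝ) (P : Fin 3 → MvPolynomial (Fin 3) K) : ℝ :=
  if IsNonarchimedean v ∧ ∀ i d, v ((P i).coeff d) ≤ 1 then 1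
  else 1 + ∑ i, ∑ d ∈ (P i).support, v ((P i).coeff d)

variable (v : AbsoluteValue K ℝ) {P : Fin 3 → MvPolynomial (Fin 3) K}

lemma one_le_polyMapBound : 1 ≤ polyMapBound v P := by
  unfold polyMapBound
  split_ifs
  · exact le_rfl
  · exact le_add_of_nonneg_right (by positivity)

lemma vNorm_polyMap_le {N : ℕ} (hP : ∀ i, (P i).IsHomogeneous N) (b : Fin 3 → K) :
    vNorm v (polyMap P b) ≤ polyMapBound v P * vNorm v b ^ N := by
  refine vNorm_le v fun i => ?_
  change v (eval b (P i)) ≤ _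
  rw [vNorm_eq_iSup, polyMapBound]
  split_ifs with h
  · grw [h.1.eval_mvPolynomial_le (hP i) b]
    gcongr
    · exact pow_nonneg (Real.iSup_nonneg_of_nonnegHomClass v _) N
    · exact Real.iSup_le (fun s => h.2 i s) zero_le_one
  · grw [v.eval_mvPolynomial_le (hP i) b]
    gcongr
    · exact pow_nonneg (Real.iSup_nonneg_of_nonnegHomClass v _) N
    · refine le_add_of_nonneg_of_le zero_le_one ?_
      exact Finset.single_le_sum (f := fun j => ∑ d ∈ (P j).support, v ((P j).coeff d))
        (fun j _ => by positivity) (Finset.mem_univ i)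

lemma log_vNorm_polyMap_le {N : ℕ} (hP : ∀ i, (P i).IsHomogeneous N) {b : Fin 3 → K}
    (hb : b ≠ 0) (hPb : polyMap P b ≠ 0) :
    log (vNorm v (polyMap P b)) ≤ log (polyMapBound v P) + N * log (vNorm v b) := by
  have hC := zero_lt_one.trans_le (one_le_polyMapBound v (P := P))
  rw [← log_pow, ← log_mul hC.ne' (pow_pos (vNorm_pos v hb) N).ne']
  exact log_le_log (vNorm_pos v hPb) (vNorm_polyMap_le v hP b)

end polyMap

section places

variable {K : Type*} [Field K] {ι : Type*} (M : ι → AbsoluteValue K ℝ)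

lemma finite_support_log_polyMapBound
    (hfin : ∀ c : K, c ≠ 0 → (support fun w => log (M w c)).Finite)
    (harch : {w | ¬ IsNonarchimedean (M w)}.Finite)
    (P : Fin 3 → MvPolynomial (Fin 3) K) :
    (support fun w => log (polyMapBound (M w) P)).Finite := by
  refine (harch.union (Set.finite_iUnion fun i => (P i).support.finite_toSet.biUnion
    fun d hd => hfin _ (mem_support_iff.mp hd))).subset fun w hw => ?_
  by_contra hout
  simp only [Set.mem_union, Set.mem_ofPred_eq, not_not, Set.mem_iUnion, Finset.mem_coe,
    mem_support, not_or, not_exists, exists_prop, not_and] at hout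
  have hcoeff i d : M w ((P i).coeff d) ≤ 1 := by
    by_cases hd : (P i).coeff d = 0
    · simp [hd]
    · exact le_one_of_log_eq_zero (hout.2 i d (mem_support_iff.mpr hd))
  refine hw ?_
  change log (polyMapBound (M w) P) = 0
  rw [polyMapBound, if_pos ⟨hout.1, hcoeff⟩, log_one]

lemma finite_support_posLog_vNorm
    (hfin : ∀ c : K, c ≠ 0 → (support fun w => log (M w c)).Finite) (a : Fin 3 → K) :
    (support fun w => log⁺ (vNorm (M w) a)).Finite := by
  refine (Set.finite_iUnion fun i => ?_ : (⋃ i, support fun w => log (M w (a i))).Finite).subset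
    fun w hw => ?_
  · by_cases ha : a i = 0
    · simp [ha]
    · exact hfin _ ha
  by_contra hout
  simp only [Set.mem_iUnion, mem_support, not_exists, not_not] at hout
  refine hw ?_
  rw [posLog_eq_zero_iff, abs_of_nonneg (vNorm_nonneg _ _)]
  exact vNorm_le _ fun i => le_one_of_log_eq_zero (hout i)

lemma neg_finsum_le_log_vNorm
    (hfin : ∀ c : K, c ≠ 0 → (support fun w => log (M w c)).Finite)
    (hprod : ∀ c : K, c ≠ 0 → ∑ᶠ w : ι, log (M w c) = 0)
    {g : ι → ℝ} (hg : (support g).Finite) {v : ι} (hgv : 0 ≤ g v)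
    {b : Fin 3 → K} (hb : b ≠ 0) (hbg : ∀ w, log (vNorm (M w) b) ≤ g w) :
    -∑ᶠ w, g w ≤ log (vNorm (M v) b) := by
  obtain ⟨i, hi⟩ := Function.ne_iff.mp hb
  have hcoord w : log (M w (b i)) ≤ log (vNorm (M w) b) :=
    log_le_log ((M w).pos hi) (le_vNorm _ b i)
  exact (neg_finsum_le_of_finsum_eq_zero (hfin _ hi) hg (hprod _ hi) hgv
    fun w _ => (hcoord w).trans (hbg w)).trans (hcoord v)

end places

lemma log_vNorm_iterate_le {K : Type*} [Field K] (v : AbsoluteValue K ℝ)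
    {N : ℕ} (hN : 2 ≤ N) {P : Fin 3 → MvPolynomial (Fin 3) K} (hP : ∀ i, (P i).IsHomogeneous N)
    {a : Fin 3 → K} (ha : ∀ k, (polyMap P)^[k] a ≠ 0) (n : ℕ) :
    log (vNorm v ((polyMap P)^[n] a)) ≤
      (N : ℝ) ^ n * (log (polyMapBound v P) + log⁺ (vNorm v a)) := by
  refine le_pow_mul_of_le_add_mul (x := fun k => log (vNorm v ((polyMap P)^[k] a)))
    (by exact_mod_cast hN) (log_nonneg (one_le_polyMapBound v)) (le_max_right _ _) (fun k => ?_) n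
  have hk := ha (k + 1)
  rw [iterate_succ_apply'] at hk ⊢
  exact log_vNorm_polyMap_le v hP (ha k) hk

theorem stmt_0_general {K : Type*} [Field K]
    {ι : Type*} (M : ι → AbsoluteValue K ℝ)
    (hfin : ∀ c : K, c ≠ 0 → (Function.support fun w => Real.log (M w c)).Finite)
    (hprod : ∀ c : K, c ≠ 0 → ∑ᶠ w : ι, Real.log (M w c) = 0)
    (harch : {w : ι | ¬ ∀ x y : K, M w (x + y) ≤ max (M w x) (M w y)}.Finite)
    (v : ι)
    (lam : ℕ) (hlam : 2 ≤ lam)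
    (P : Fin 3 → MvPolynomial (Fin 3) K)
    (hhom : ∀ i, (P i).IsHomogeneous lam)
    (a : Fin 3 → K)
    (ha : ∀ k : ℕ, (polyMap P)^[k] a ≠ 0) :
    ∃ B : ℝ, ∀ n : ℕ,
      -B ≤ ∑ k ∈ Finset.range n,
        ((lam : ℝ)⁻¹) ^ k *
          ((1 / (lam : ℝ)) * Real.log (vNorm (M v) (polyMap P ((polyMap P)^[k] a)))
            - Real.log (vNorm (M v) ((polyMap P)^[k] a))) := by
  set g : ι → ℝ := fun w => log (polyMapBound (M w) P) + log⁺ (vNorm (M w) a)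
  have hg : (support g).Finite :=
    ((finite_support_log_polyMapBound M hfin harch P).union
      (finite_support_posLog_vNorm M hfin a)).subset (support_add _ _)
  have hgv : 0 ≤ g v := add_nonneg (log_nonneg (one_le_polyMapBound _)) posLog_nonneg
  have hlower n : -∑ᶠ w, g w ≤ (lam : ℝ)⁻¹ ^ n * log (vNorm (M v) ((polyMap P)^[n] a)) := by
    have hpow : (0 : ℝ) < (lam : ℝ) ^ n := by positivity
    rw [inv_pow, ← div_eq_inv_mul, le_div_iff₀ hpow, mul_comm, mul_neg, mul_finsum]
    exact neg_finsum_le_log_vNorm M hfin hprod (hg.subset (support_mul_subset_right _ _))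
      (mul_nonneg hpow.le hgv) (ha n) fun w => log_vNorm_iterate_le (M w) hlam hhom ha n
  refine ⟨∑ᶠ w, g w + log (vNorm (M v) a), fun n => ?_⟩
  simp only [← iterate_succ_apply' (polyMap P)]
  rw [sum_range_inv_pow_mul_sub (fun k => log (vNorm (M v) ((polyMap P)^[k] a))),
    iterate_zero_apply]
  linarith [hlower n]

/-- the `v`-adic Bedford–Diller type energy estimate for a homogeneous
lift `F = (F₀,F₁,F₂)` of degree `λ ≥ 2` of a plane birational map, over a number field `K`
whose set of normalized nontrivial absolute values `M_K` is modeled by the family `M`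
(satisfying the product formula, finiteness of support, and all but finitely many places
non-archimedean). -/
theorem stmt_0 {K : Type*} [Field K] [NumberField K]
    {ι : Type*} (M : ι → AbsoluteValue K ℝ)
    (hnontriv : ∀ w : ι, ∃ x : K, x ≠ 0 ∧ M w x ≠ 1)
    (hfin : ∀ c : K, c ≠ 0 → (Function.support fun w => Real.log (M w c)).Finite)
    (hprod : ∀ c : K, c ≠ 0 → ∑ᶠ w : ι, Real.log (M w c) = 0)
    (harch : {w : ι | ¬ ∀ x y : K, M w (x + y) ≤ max (M w x) (M w y)}.Finite)
    (v : ι)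
    (lam : ℕ) (hlam : 2 ≤ lam)
    (P : Fin 3 → MvPolynomial (Fin 3) K)
    (hhom : ∀ i, (P i).IsHomogeneous lam)
    (a : Fin 3 → K)
    (ha : ∀ k : ℕ, (polyMap P)^[k] a ≠ 0) :
    ∃ B : ℝ, ∀ n : ℕ,
      -B ≤ ∑ k ∈ Finset.range n,
        ((lam : ℝ)⁻¹) ^ k *
          ((1 / (lam : ℝ)) * Real.log (vNorm (M v) (polyMap P ((polyMap P)^[k] a)))
            - Real.log (vNorm (M v) ((polyMap P)^[k] a))) :=
  stmt_0_general M hfin hprod harch v lam hlam P hhom a ha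
end

section
/- Let λ > 1 be a real number, V a type, and C : V → ℝ a nonnegative summable function. Let a : ℕ → V → ℝ be such that for each k the set {v ∈ V : a(k,v) ≠ 0} is finite and a(k,v) ≤ C(v) for all v ∈ V. Suppose there is B ∈ ℝ such that ∑_{k=0}^{n-1} λ^{-k} (∑_{v∈V} a(k,v)) ≥ −B for every n ≥ 0 (the inner sum being the finite sum over the support of a(k,·)). Then for every v₀ ∈ V and every n ≥ 0 one has ∑_{k=0}^{n-1} λ^{-k} a(k,v₀) ≥ −B − (λ/(λ−1)) · ∑_{v∈V} C(v). In particular, for each v₀ the partial sums of the series ∑_k λ^{-k} a(k,v₀) are bounded below. -/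
open Filter

/-- abstract summation lemma. If the global sums
`∑_{k<n} λ^{-k} ∑_v a(k,v)` are bounded below by `-B`, each `a(k,·)` is finitely
supported and bounded above by a nonnegative summable family `C`, then for each
place `v₀` the partial sums `∑_{k<n} λ^{-k} a(k,v₀)` are bounded below by
`-B - (λ/(λ-1)) ∑_v C(v)`. -/
theorem stmt_5 {V : Type*} (lam : ℝ) (hlam : 1 < lam)
    (C : V → ℝ) (hC0 : ∀ v, 0 ≤ C v) (hCsum : Summable C)
    (a : ℕ → V → ℝ)
    (hsupp : ∀ k : ℕ, (Function.support (a k)).Finite)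
    (hle : ∀ (k : ℕ) (v : V), a k v ≤ C v)
    (B : ℝ)
    (hB : ∀ n : ℕ, -B ≤ ∑ k ∈ Finset.range n, lam⁻¹ ^ k * (∑ᶠ v : V, a k v)) :
    ∀ (v₀ : V) (n : ℕ),
      -B - (lam / (lam - 1)) * (∑' v : V, C v) ≤
        ∑ k ∈ Finset.range n, lam⁻¹ ^ k * a k v₀ := by
  classical
  intro v₀ n
  have hlam0 : 0 < lam := lt_trans one_pos hlam
  set r := lam⁻¹ with hr
  have hr0 : 0 ≤ r := by positivity
  have hr1 : r < 1 := inv_lt_one_of_one_lt₀ hlam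
  set T := ∑' v, C v with hT
  have hT0 : 0 ≤ T := tsum_nonneg hC0
  have key : ∀ k, (∑ᶠ v, a k v) - T ≤ a k v₀ := by
    intro k
    have hs := hsupp k
    have hfin : ∑ᶠ v, a k v = ∑ v ∈ hs.toFinset, a k v :=
      finsum_eq_sum (a k) hs
    by_cases hv : v₀ ∈ hs.toFinset
    · have hsplit : ∑ v ∈ hs.toFinset, a k v
          = a k v₀ + ∑ v ∈ hs.toFinset.erase v₀, a k v :=
        (Finset.add_sum_erase _ _ hv).symm
      have h2 : ∑ v ∈ hs.toFinset.erase v₀, a k v ≤ T := by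
        calc ∑ v ∈ hs.toFinset.erase v₀, a k v
            ≤ ∑ v ∈ hs.toFinset.erase v₀, C v :=
              Finset.sum_le_sum fun v _ => hle k v
          _ ≤ T := Summable.sum_le_tsum _ (fun v _ => hC0 v) hCsum
      linarith [hfin, hsplit]
    · have hv0 : a k v₀ = 0 := by
        by_contra h
        exact hv (hs.mem_toFinset.mpr h)
      have h2 : ∑ v ∈ hs.toFinset, a k v ≤ T := by
        calc ∑ v ∈ hs.toFinset, a k v
            ≤ ∑ v ∈ hs.toFinset, C v := Finset.sum_le_sum fun v _ => hle k v
          _ ≤ T := Summable.sum_le_tsum _ (fun v _ => hC0 v) hCsum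
      linarith [hfin]
  have sum_bd : ∑ k ∈ Finset.range n, r ^ k * ((∑ᶠ v, a k v) - T)
      ≤ ∑ k ∈ Finset.range n, r ^ k * a k v₀ :=
    Finset.sum_le_sum fun k _ => mul_le_mul_of_nonneg_left (key k) (pow_nonneg hr0 k)
  have expand : ∑ k ∈ Finset.range n, r ^ k * ((∑ᶠ v, a k v) - T)
      = (∑ k ∈ Finset.range n, r ^ k * (∑ᶠ v, a k v))
        - (∑ k ∈ Finset.range n, r ^ k) * T := by
    rw [Finset.sum_mul, ← Finset.sum_sub_distrib]
    exact Finset.sum_congr rfl fun k _ => by ring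
  have geom : ∑ k ∈ Finset.range n, r ^ k ≤ lam / (lam - 1) := by
    have h1 : ∑ k ∈ Finset.range n, r ^ k ≤ (1 - r)⁻¹ := by
      have := Summable.sum_le_tsum (Finset.range n)
        (fun k _ => pow_nonneg hr0 k) (summable_geometric_of_lt_one hr0 hr1)
      rwa [tsum_geometric_of_lt_one hr0 hr1] at this
    have h2 : (1 - r)⁻¹ = lam / (lam - 1) := by
      rw [hr]
      field_simp
    linarith
  have geomT : (∑ k ∈ Finset.range n, r ^ k) * T ≤ (lam / (lam - 1)) * T :=
    mul_le_mul_of_nonneg_right geom hT0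
  have hBn := hB n
  rw [expand] at sum_bd
  linarith
end
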